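/- Let T > 0, let u : [0,T] × ℝ³ → ℝ³ be twice continuously differentiable with u and its first spatial derivatives bounded on [0,T] × ℝ³, and let F : [0,T] × ℝ³ → M³ˣ³(ℝ) be twice continuously differentiable and satisfy ∂_t F + u·∇F = ∇u F pointwise. If at t = 0 the identity Σ_l F_{lk} ∂_l F_{ij} = Σ_l F_{lj} ∂_l F_{ik} holds for all i,j,k and all x ∈ ℝ³, then this identity holds for all t ∈ [0,T], all i,j,k and all x ∈ ℝ³. -/

import Mathlib

/-!
Work in space-time `ℝ × ℝ³` with the vector fields `U = (1, u)` and `X_j = (0, F_{·j})` (the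
columns of `F`). The transport equation says exactly that `[U, X_j] = 0` on the slab `[0,T] × ℝ³`,
and the defect `Σ_l F_{lk} ∂_l F_{ij} - Σ_l F_{lj} ∂_l F_{ik}` is the spatial part of `[X_k, X_j]`.
Since the `X_j` are tangent to the time slices, the Jacobi identity gives `[U, [X_k, X_j]] = 0` on
the slab. Along a characteristic `s ↦ (s, X(s))` of `U` the bracket `B = [X_k, X_j]` therefore
solves the linear equation `d/ds B = DU · B = (0, ∇u B)`, and as `∇u` is bounded, Grönwall's
inequality propagates `B = 0` from `s = 0`. Characteristics through every point exist on all of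
`[0,T]` because `u` is bounded and, by the bound on `∇u`, globally Lipschitz in space.
-/

/-- Spatial partial derivative `∂_i f` of a scalar field on `ℝ³`. -/
noncomputable def pd (i : Fin 3) (f : (Fin 3 → ℝ) → ℝ) (x : Fin 3 → ℝ) : ℝ :=
  fderiv ℝ f x (Pi.single i 1)

open Set Function VectorField
open scoped NNReal

namespace VectorField

variable {𝕜 : Type*} [NontriviallyNormedField 𝕜]
  {E : Type*} [NormedAddCommGroup E] [NormedSpace 𝕜 E]
  {F : Type*} [NormedAddCommGroup F] [NormedSpace 𝕜 F]

theorem lieBracket_prodMk_const (a b : E) {g h : E × F → F} {p : E × F}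
    (hg : DifferentiableAt 𝕜 g p) (hh : DifferentiableAt 𝕜 h p) :
    lieBracket 𝕜 (fun q => (a, g q)) (fun q => (b, h q)) p
      = (0, fderiv 𝕜 h p (a, g p) - fderiv 𝕜 g p (b, h p)) := by
  rw [lieBracket, ((hasFDerivAt_const a p).prodMk hg.hasFDerivAt).fderiv,
    ((hasFDerivAt_const b p).prodMk hh.hasFDerivAt).fderiv]
  simp

theorem lieBracket_eq_zero_of_forall_add_smul {V W : E → E} {p : E}
    (hV : DifferentiableAt 𝕜 V p) (h : ∀ s : 𝕜, V (p + s • W p) = 0) :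
    lieBracket 𝕜 V W p = 0 := by
  have hVW : fderiv 𝕜 V p (W p) = 0 := by
    rw [← hV.lineDeriv_eq_fderiv, lineDeriv, funext h, deriv_const]
  have hVp : V p = 0 := by simpa using h 0
  simp [lieBracket, hVW, hVp]

theorem lieBracket_lieBracket_eq_zero {n : WithTop ℕ∞} (hn : minSmoothness 𝕜 2 ≤ n)
    {U V W : E → E} {S : Set E} {p : E}
    (hU : ContDiffAt 𝕜 n U p) (hV : ContDiffAt 𝕜 n V p) (hW : ContDiffAt 𝕜 n W p)
    (hUV : ∀ q ∈ S, lieBracket 𝕜 U V q = 0) (hUW : ∀ q ∈ S, lieBracket 𝕜 U W q = 0)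
    (hVS : ∀ s : 𝕜, p + s • V p ∈ S) (hWS : ∀ s : 𝕜, p + s • W p ∈ S) :
    lieBracket 𝕜 U (lieBracket 𝕜 V W) p = 0 := by
  have h2n : (1 : WithTop ℕ∞) + 1 ≤ n := le_trans (by norm_num) (le_minSmoothness.trans hn)
  rw [leibniz_identity_lieBracket hn hU hV hW, lieBracket_swap (V := V),
    lieBracket_eq_zero_of_forall_add_smul
      ((hU.lieBracket_vectorField hV h2n).differentiableAt one_ne_zero) fun s => hUV _ (hWS s),
    lieBracket_eq_zero_of_forall_add_smul
      ((hU.lieBracket_vectorField hW h2n).differentiableAt one_ne_zero) fun s => hUW _ (hVS s)]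
  simp

end VectorField

section RealVectorField

variable {E : Type*} [NormedAddCommGroup E] [NormedSpace ℝ E]

theorem VectorField.eq_zero_along_integralCurve_of_lieBracket_eq_zero {U B : E → E}
    {γ : ℝ → E} {a b K : ℝ} (hB : Differentiable ℝ B)
    (hγ : ∀ s ∈ Icc a b, HasDerivWithinAt γ (U (γ s)) (Icc a b) s)
    (hUB : ∀ s ∈ Icc a b, lieBracket ℝ U B (γ s) = 0)
    (hbound : ∀ s ∈ Icc a b, ‖fderiv ℝ U (γ s) (B (γ s))‖ ≤ K * ‖B (γ s)‖)
    (ha : B (γ a) = 0) : ∀ s ∈ Icc a b, B (γ s) = 0 := by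
  have hderiv : ∀ s ∈ Icc a b,
      HasDerivWithinAt (B ∘ γ) (fderiv ℝ U (γ s) (B (γ s))) (Icc a b) s := fun s hs => by
    rw [← sub_eq_zero.mp (hUB s hs)]
    exact (hB _).hasFDerivAt.comp_hasDerivWithinAt s (hγ s hs)
  refine eq_zero_of_abs_deriv_le_mul_abs_self_of_eq_zero_right
    (fun s hs => (hderiv s hs).continuousWithinAt) (fun s hs => ?_) ha
    (fun s hs => hbound s (Ico_subset_Icc_self hs))
  exact (hderiv s (Ico_subset_Icc_self hs)).mono_of_mem_nhdsWithin (Icc_mem_nhdsGE_of_mem hs)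

theorem exists_eq_forall_mem_Icc_hasDerivWithinAt_of_lipschitzWith [CompleteSpace E]
    {v : ℝ → E → E} {a b : ℝ} {K L : ℝ≥0}
    (hlip : ∀ t ∈ Icc a b, LipschitzWith K (v t))
    (hcont : ∀ x, ContinuousOn (v · x) (Icc a b))
    (hbound : ∀ t ∈ Icc a b, ∀ x, ‖v t x‖ ≤ L) {t₀ : ℝ} (ht₀ : t₀ ∈ Icc a b) (x₀ : E) :
    ∃ X : ℝ → E, X t₀ = x₀ ∧ ∀ t ∈ Icc a b, HasDerivWithinAt X (v t (X t)) (Icc a b) t := by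
  have hpl : IsPicardLindelof v ⟨t₀, ht₀⟩ x₀ (Real.toNNReal (L * (b - a))) 0 L K :=
    { lipschitzOnWith := fun t ht => (hlip t ht).lipschitzOnWith
      continuousOn := fun x _ => hcont x
      norm_le := fun t ht x _ => hbound t ht x
      mul_max_le := by
        rw [NNReal.coe_zero, sub_zero]
        refine le_trans ?_ (Real.le_coe_toNNReal _)
        gcongr
        exact max_le (by linarith [ht₀.1]) (by linarith [ht₀.2]) }
  exact hpl.exists_eq_forall_mem_Icc_hasDerivWithinAt₀

end RealVectorField

theorem fderiv_uncurry_apply {𝕜 E F : Type*} [NontriviallyNormedField 𝕜]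
    [NormedAddCommGroup E] [NormedSpace 𝕜 E] [NormedAddCommGroup F] [NormedSpace 𝕜 F]
    {g : 𝕜 → E → F} {t : 𝕜} {x : E} (hg : DifferentiableAt 𝕜 (fun p : 𝕜 × E => g p.1 p.2) (t, x))
    (τ : 𝕜) (v : E) :
    fderiv 𝕜 (fun p : 𝕜 × E => g p.1 p.2) (t, x) (τ, v)
      = τ • deriv (fun s => g s x) t + fderiv 𝕜 (g t) x v := by
  have htime :
      HasDerivAt (fun s => g s x) (fderiv 𝕜 (fun p : 𝕜 × E => g p.1 p.2) (t, x) (1, 0)) t :=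
    hg.hasFDerivAt.comp_hasDerivAt (f := fun s => (s, x)) t
      ((hasDerivAt_id t).prodMk (hasDerivAt_const t x))
  have hspace : HasFDerivAt (g t)
      ((fderiv 𝕜 (fun p : 𝕜 × E => g p.1 p.2) (t, x)).comp (.inr 𝕜 𝕜 E)) x :=
    hg.hasFDerivAt.comp x (hasFDerivAt_prodMk_right t x)
  rw [htime.deriv, hspace.fderiv, ← map_smul, ContinuousLinearMap.comp_apply, ← map_add]
  simp

theorem ContinuousLinearMap.norm_le_card_mul_of_abs_apply_single_le {ι κ : Type*} [Fintype ι]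
    [DecidableEq ι] [Fintype κ] (L : (ι → ℝ) →L[ℝ] (κ → ℝ)) {C : ℝ} (hC : 0 ≤ C)
    (h : ∀ i j, |L (Pi.single j 1) i| ≤ C) : ‖L‖ ≤ Fintype.card ι * C := by
  refine L.opNorm_le_bound (by positivity) fun v => ?_
  have hcol : ∀ j, ‖L (Pi.single j 1)‖ ≤ C := fun j =>
    (pi_norm_le_iff_of_nonneg hC).2 fun i => (Real.norm_eq_abs _).trans_le (h i j)
  calc ‖L v‖ = ‖∑ j, v j • L (Pi.single j 1)‖ := by
        conv_lhs => rw [pi_eq_sum_univ' v, map_sum]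
        simp only [map_smul]
    _ ≤ ∑ j, ‖v j‖ * ‖L (Pi.single j 1)‖ := (norm_sum_le _ _).trans (by simp [norm_smul])
    _ ≤ ∑ _j : ι, ‖v‖ * C := by
        gcongr with j
        exacts [norm_le_pi_norm v j, hcol j]
    _ = Fintype.card ι * C * ‖v‖ := by simp; ring

theorem fderiv_apply_eq_sum_pd (f : (Fin 3 → ℝ) → ℝ) (x v : Fin 3 → ℝ) :
    fderiv ℝ f x v = ∑ l, v l * pd l f x := by
  conv_lhs => rw [pi_eq_sum_univ' v, map_sum]
  simp [pd]

theorem fderiv_uncurry_apply_eq_deriv_add_sum_pd {g : ℝ → (Fin 3 → ℝ) → ℝ} {t : ℝ}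
    {x : Fin 3 → ℝ} (hg : DifferentiableAt ℝ (fun p : ℝ × (Fin 3 → ℝ) => g p.1 p.2) (t, x))
    (τ : ℝ) (v : Fin 3 → ℝ) :
    fderiv ℝ (fun p : ℝ × (Fin 3 → ℝ) => g p.1 p.2) (t, x) (τ, v)
      = τ * deriv (fun s => g s x) t + ∑ l, v l * pd l (g t) x := by
  rw [fderiv_uncurry_apply hg, fderiv_apply_eq_sum_pd, smul_eq_mul]

theorem norm_fderiv_le_of_abs_pd_le {f : (Fin 3 → ℝ) → Fin 3 → ℝ} {x : Fin 3 → ℝ} {C : ℝ}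
    (hf : DifferentiableAt ℝ f x) (hC : 0 ≤ C) (h : ∀ i j, |pd j (fun y => f y i) x| ≤ C) :
    ‖fderiv ℝ f x‖ ≤ 3 * C := by
  have hcomp : ∀ i, DifferentiableAt ℝ (fun y => f y i) x := fun i =>
    (differentiableAt_pi.1 hf) i
  simpa using (fderiv ℝ f x).norm_le_card_mul_of_abs_apply_single_le hC fun i j => by
    rw [fderiv_pi hcomp]
    exact h i j

section SpaceTime

variable {u : ℝ → (Fin 3 → ℝ) → Fin 3 → ℝ} {F : ℝ → (Fin 3 → ℝ) → Fin 3 → Fin 3 → ℝ}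

def transportField (u : ℝ → (Fin 3 → ℝ) → Fin 3 → ℝ) : ℝ × (Fin 3 → ℝ) → ℝ × (Fin 3 → ℝ) :=
  fun p => (1, u p.1 p.2)

def columnField (F : ℝ → (Fin 3 → ℝ) → Fin 3 → Fin 3 → ℝ) (j : Fin 3) :
    ℝ × (Fin 3 → ℝ) → ℝ × (Fin 3 → ℝ) :=
  fun p => (0, fun i => F p.1 p.2 i j)

theorem contDiff_transportField {n : WithTop ℕ∞} (hu : ContDiff ℝ n (uncurry u)) :
    ContDiff ℝ n (transportField u) :=
  contDiff_const.prodMk hu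

theorem contDiff_columnField {n : WithTop ℕ∞} (hF : ContDiff ℝ n (uncurry F)) (j : Fin 3) :
    ContDiff ℝ n (columnField F j) :=
  contDiff_const.prodMk (contDiff_pi.2 fun i => (contDiff_pi.1 (contDiff_pi.1 hF i)) j)

theorem lieBracket_transportField_columnField (hu : Differentiable ℝ (uncurry u))
    (hF : Differentiable ℝ (uncurry F)) (j : Fin 3) (t : ℝ) (x : Fin 3 → ℝ) :
    lieBracket ℝ (transportField u) (columnField F j) (t, x)
      = (0, fun i => deriv (fun s => F s x i j) t + ∑ k, u t x k * pd k (fun y => F t y i j) x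
          - ∑ m, pd m (fun y => u t y i) x * F t x m j) := by
  have hu' : ∀ i, Differentiable ℝ fun p : ℝ × (Fin 3 → ℝ) => u p.1 p.2 i := fun i =>
    differentiable_pi.1 hu i
  have hF' : ∀ i, Differentiable ℝ fun p : ℝ × (Fin 3 → ℝ) => F p.1 p.2 i j := fun i =>
    differentiable_pi.1 (differentiable_pi.1 hF i) j
  unfold transportField columnField
  rw [lieBracket_prodMk_const (g := fun p : ℝ × (Fin 3 → ℝ) => u p.1 p.2) _ _ (hu _)
      (differentiable_pi.2 hF' _),
    fderiv_pi fun i => (hu' i).differentiableAt, fderiv_pi fun i => (hF' i).differentiableAt]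
  ext i
  · rfl
  · simp only [Pi.sub_apply, ContinuousLinearMap.pi_apply]
    rw [fderiv_uncurry_apply_eq_deriv_add_sum_pd (g := fun t y => F t y i j) (hF' i _),
      fderiv_uncurry_apply_eq_deriv_add_sum_pd (g := fun t y => u t y i) (hu' i _)]
    simp [mul_comm]

theorem lieBracket_columnField (hF : Differentiable ℝ (uncurry F)) (j k : Fin 3) (t : ℝ)
    (x : Fin 3 → ℝ) :
    lieBracket ℝ (columnField F k) (columnField F j) (t, x)
      = (0, fun i => ∑ l, F t x l k * pd l (fun y => F t y i j) x
          - ∑ l, F t x l j * pd l (fun y => F t y i k) x) := by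
  have hF' : ∀ j i, Differentiable ℝ fun p : ℝ × (Fin 3 → ℝ) => F p.1 p.2 i j := fun j i =>
    differentiable_pi.1 (differentiable_pi.1 hF i) j
  unfold columnField
  rw [lieBracket_prodMk_const _ _ (differentiable_pi.2 (hF' k)).differentiableAt
      (differentiable_pi.2 (hF' j)).differentiableAt,
    fderiv_pi fun i => (hF' j i).differentiableAt, fderiv_pi fun i => (hF' k i).differentiableAt]
  ext i
  · rfl
  · simp only [Pi.sub_apply, ContinuousLinearMap.pi_apply]
    rw [fderiv_uncurry_apply_eq_deriv_add_sum_pd (g := fun t y => F t y i j) (hF' j i _),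
      fderiv_uncurry_apply_eq_deriv_add_sum_pd (g := fun t y => F t y i k) (hF' k i _)]
    simp

theorem norm_fderiv_transportField_apply_le (hu : Differentiable ℝ (uncurry u)) {t K : ℝ}
    (hK : ∀ x, ‖fderiv ℝ (u t) x‖ ≤ K) (x w : Fin 3 → ℝ) :
    ‖fderiv ℝ (transportField u) (t, x) (0, w)‖ ≤ K * ‖((0 : ℝ), w)‖ := by
  have hderiv : HasFDerivAt (transportField u)
      ((0 : ℝ × (Fin 3 → ℝ) →L[ℝ] ℝ).prod (fderiv ℝ (fun p : ℝ × _ => u p.1 p.2) (t, x))) (t, x) :=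
    (hasFDerivAt_const (1 : ℝ) (t, x)).prodMk (hu (t, x)).hasFDerivAt
  rw [hderiv.fderiv]
  simp only [ContinuousLinearMap.prod_apply, zero_apply]
  rw [fderiv_uncurry_apply (hu _), zero_smul, zero_add]
  simpa [Prod.norm_def] using ((fderiv ℝ (u t) x).le_opNorm w).trans
    (mul_le_mul_of_nonneg_right (hK x) (norm_nonneg w))

theorem lieBracket_transportField_lieBracket_columnField_eq_zero
    (hu : ContDiff ℝ 2 (uncurry u)) (hF : ContDiff ℝ 2 (uncurry F)) {I : Set ℝ}
    (hcommute : ∀ j, ∀ t ∈ I, ∀ x, lieBracket ℝ (transportField u) (columnField F j) (t, x) = 0)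
    (j k : Fin 3) {t : ℝ} (ht : t ∈ I) (x : Fin 3 → ℝ) :
    lieBracket ℝ (transportField u) (lieBracket ℝ (columnField F k) (columnField F j)) (t, x)
      = 0 := by
  have hslab : ∀ j, ∀ p ∈ {p : ℝ × (Fin 3 → ℝ) | p.1 ∈ I},
      lieBracket ℝ (transportField u) (columnField F j) p = 0 := fun j p hp => hcommute j _ hp _
  exact lieBracket_lieBracket_eq_zero (by simp) (contDiff_transportField hu).contDiffAt
    (contDiff_columnField hF k).contDiffAt (contDiff_columnField hF j).contDiffAt
    (hslab k) (hslab j) (fun s => by simpa [columnField] using ht)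
    (fun s => by simpa [columnField] using ht)

theorem exists_eq_forall_mem_Icc_hasDerivWithinAt_transportField
    (hu : Differentiable ℝ (uncurry u)) {a b C K : ℝ}
    (hbound : ∀ t ∈ Icc a b, ∀ x, ‖u t x‖ ≤ C) (hgrad : ∀ t ∈ Icc a b, ∀ x, ‖fderiv ℝ (u t) x‖ ≤ K)
    {t₀ : ℝ} (ht₀ : t₀ ∈ Icc a b) (x₀ : Fin 3 → ℝ) :
    ∃ X : ℝ → Fin 3 → ℝ, X t₀ = x₀ ∧ ∀ s ∈ Icc a b,
      HasDerivWithinAt (fun s => (s, X s)) (transportField u (s, X s)) (Icc a b) s := by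
  have hslice : ∀ t, Differentiable ℝ (u t) := fun t =>
    hu.comp ((differentiable_const t).prodMk differentiable_id)
  obtain ⟨X, hX₀, hX⟩ := exists_eq_forall_mem_Icc_hasDerivWithinAt_of_lipschitzWith
    (K := K.toNNReal) (L := C.toNNReal)
    (fun t ht => lipschitzWith_of_nnnorm_fderiv_le (hslice t) fun x => by
      rw [← NNReal.coe_le_coe, coe_nnnorm]
      exact (hgrad t ht x).trans (Real.le_coe_toNNReal K))
    (fun x => (hu.continuous.comp (continuous_id.prodMk continuous_const)).continuousOn)
    (fun t ht x => (hbound t ht x).trans (Real.le_coe_toNNReal C)) ht₀ x₀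
  exact ⟨X, hX₀, fun s hs => (hasDerivWithinAt_id s _).prodMk (hX s hs)⟩

end SpaceTime

theorem curl_identity_propagates_general
    (T : ℝ)
    (u : ℝ → (Fin 3 → ℝ) → Fin 3 → ℝ)
    (F : ℝ → (Fin 3 → ℝ) → Fin 3 → Fin 3 → ℝ)
    (hu : ContDiff ℝ 2 (Function.uncurry u))
    (hF : ContDiff ℝ 2 (Function.uncurry F))
    (hubd : ∃ C : ℝ, ∀ t ∈ Set.Icc (0 : ℝ) T, ∀ x : Fin 3 → ℝ, ∀ i j : Fin 3,
      |u t x i| ≤ C ∧ |pd j (fun y => u t y i) x| ≤ C)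
    (heq : ∀ t ∈ Set.Icc (0 : ℝ) T, ∀ x : Fin 3 → ℝ, ∀ i j : Fin 3,
      deriv (fun s => F s x i j) t + ∑ k, u t x k * pd k (fun y => F t y i j) x
        = ∑ m, pd m (fun y => u t y i) x * F t x m j)
    (h0 : ∀ x : Fin 3 → ℝ, ∀ i j k : Fin 3,
      ∑ l, F 0 x l k * pd l (fun y => F 0 y i j) x
        = ∑ l, F 0 x l j * pd l (fun y => F 0 y i k) x) :
    ∀ t ∈ Set.Icc (0 : ℝ) T, ∀ x : Fin 3 → ℝ, ∀ i j k : Fin 3,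
      ∑ l, F t x l k * pd l (fun y => F t y i j) x
        = ∑ l, F t x l j * pd l (fun y => F t y i k) x := by
  intro t₀ ht₀ x₀ i j k
  obtain ⟨C, hC⟩ := hubd
  have hC₀ : 0 ≤ C := (abs_nonneg _).trans (hC t₀ ht₀ x₀ 0 0).1
  have hu₁ : Differentiable ℝ (uncurry u) := hu.differentiable (by norm_num)
  have hF₁ : Differentiable ℝ (uncurry F) := hF.differentiable (by norm_num)
  have hgrad : ∀ t ∈ Icc 0 T, ∀ x, ‖fderiv ℝ (u t) x‖ ≤ 3 * C := fun t ht x =>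
    norm_fderiv_le_of_abs_pd_le ((hu₁.comp ((differentiable_const t).prodMk differentiable_id)) x)
      hC₀ fun i j => (hC t ht x i j).2
  have hcommute : ∀ j, ∀ t ∈ Icc 0 T, ∀ x,
      lieBracket ℝ (transportField u) (columnField F j) (t, x) = 0 := by
    intro j t ht x
    rw [lieBracket_transportField_columnField hu₁ hF₁]
    ext i <;> simp [heq t ht x]
  obtain ⟨X, hX₀, hX⟩ := exists_eq_forall_mem_Icc_hasDerivWithinAt_transportField hu₁
    (fun t ht x => (pi_norm_le_iff_of_nonneg hC₀).2 fun i => (hC t ht x i 0).1) hgrad ht₀ x₀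
  have hvanish := eq_zero_along_integralCurve_of_lieBracket_eq_zero
    ((contDiff_columnField hF k).lieBracket_vectorField (contDiff_columnField hF j)
      (by norm_num) |>.differentiable one_ne_zero)
    hX (fun s hs =>
      lieBracket_transportField_lieBracket_columnField_eq_zero hu hF hcommute j k hs _)
    (fun s hs => by
      rw [lieBracket_columnField hF₁]
      exact norm_fderiv_transportField_apply_le hu₁ (hgrad s hs) _ _)
    (by rw [lieBracket_columnField hF₁]; ext i <;> simp [h0])
    t₀ ht₀
  rw [lieBracket_columnField hF₁, hX₀] at hvanish
  exact sub_eq_zero.mp (congrFun (congrArg Prod.snd hvanish) i)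

/-- **Lemma 2.1.** Propagation of the curl-type compatibility identity: if `u` is a `C²`
velocity field, bounded together with its first spatial derivatives on `[0,T] × ℝ³`, and the
`C²` field `F` solves `∂_t F + u·∇F = ∇u F`, then the identity
`Σ_l F_{lk} ∂_l F_{ij} = Σ_l F_{lj} ∂_l F_{ik}`, once valid at `t = 0`, holds for all
`t ∈ [0,T]`. -/
theorem curl_identity_propagates
    (T : ℝ) (hT : 0 < T)
    (u : ℝ → (Fin 3 → ℝ) → Fin 3 → ℝ)
    (F : ℝ → (Fin 3 → ℝ) → Fin 3 → Fin 3 → ℝ)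
    (hu : ContDiff ℝ 2 (Function.uncurry u))
    (hF : ContDiff ℝ 2 (Function.uncurry F))
    (hubd : ∃ C : ℝ, ∀ t ∈ Set.Icc (0 : ℝ) T, ∀ x : Fin 3 → ℝ, ∀ i j : Fin 3,
      |u t x i| ≤ C ∧ |pd j (fun y => u t y i) x| ≤ C)
    (heq : ∀ t ∈ Set.Icc (0 : ℝ) T, ∀ x : Fin 3 → ℝ, ∀ i j : Fin 3,
      deriv (fun s => F s x i j) t + ∑ k, u t x k * pd k (fun y => F t y i j) x
        = ∑ m, pd m (fun y => u t y i) x * F t x m j)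
    (h0 : ∀ x : Fin 3 → ℝ, ∀ i j k : Fin 3,
      ∑ l, F 0 x l k * pd l (fun y => F 0 y i j) x
        = ∑ l, F 0 x l j * pd l (fun y => F 0 y i k) x) :
    ∀ t ∈ Set.Icc (0 : ℝ) T, ∀ x : Fin 3 → ℝ, ∀ i j k : Fin 3,
      ∑ l, F t x l k * pd l (fun y => F t y i j) x
        = ∑ l, F t x l j * pd l (fun y => F t y i k) x :=
  curl_identity_propagates_general T u F hu hF hubd heq h0
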